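/- arXiv:2110.11846 — 3 statements merged into one kernel-verified Lean document; each statement's English description precedes it below -/
import Mathlib

section
/- Let μ and μ̃ be stable matchings of the market (F,W,P) and let a be any agent (firm or worker). If the preference relation P_a is substitutable and satisfies the law of aggregate demand, then the reduced preference relation P^{μ,μ̃}_a is substitutable and satisfies the law of aggregate demand. -/
open Finset

noncomputable section

open scoped Classical

/-- `C` is a choice function: `C S ⊆ S` for every `S`. -/
def IsChoiceFun {α : Type*} (C : Finset α → Finset α) : Prop := ∀ S, C S ⊆ S

/-- Substitutability of a choice function: if `b` is chosen from `S`, then `b` is chosen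
from `S' ∪ {b}` for every `S' ⊆ S`. -/
def Substitutable {α : Type*} [DecidableEq α] (C : Finset α → Finset α) : Prop :=
  ∀ (S S' : Finset α) (b : α), S' ⊆ S → b ∈ C S → b ∈ C (insert b S')

/-- The law of aggregate demand for a choice function. -/
def LAD {α : Type*} (C : Finset α → Finset α) : Prop :=
  ∀ S' S : Finset α, S' ⊆ S → (C S').card ≤ (C S).card

/-- The most `u`-preferred subset of `S` among the members of the family `A` of acceptable
sets (the empty set is always available as a fallback). -/
def bestIn {α : Type*} (u : Finset α → ℕ) (A : Set (Finset α)) (S : Finset α) : Finset α := by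
  classical
  have h : ∃ T ∈ (S.powerset).filter (fun T => T ∈ A ∨ T = ∅),
      ∀ T' ∈ (S.powerset).filter (fun T => T ∈ A ∨ T = ∅), u T' ≤ u T :=
    Finset.exists_max_image _ u ⟨∅, by simp⟩
  exact h.choose

/-- A many-to-many matching market: each firm `f` has a strict preference over subsets
of workers, represented by an injective utility `uF f`, and symmetrically for workers. -/
structure Market (F W : Type*) where
  uF : F → Finset W → ℕ
  uW : W → Finset F → ℕ
  injF : ∀ f, Function.Injective (uF f)
  injW : ∀ w, Function.Injective (uW w)

/-- A many-to-many matching. -/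
structure Matching (F W : Type*) where
  fm : F → Finset W
  wm : W → Finset F
  consistent : ∀ f w, w ∈ fm f ↔ f ∈ wm w

namespace Market

variable {F W : Type*} [DecidableEq F] [DecidableEq W]

/-- The choice set of firm `f` under the original preference: the most preferred
subset among the acceptable subsets (those strictly preferred to `∅`). -/
def Cf (M : Market F W) (f : F) : Finset W → Finset W :=
  bestIn (M.uF f) {T | M.uF f ∅ < M.uF f T}

/-- The choice set of worker `w` under the original preference. -/
def Cw (M : Market F W) (w : W) : Finset F → Finset F :=
  bestIn (M.uW w) {T | M.uW w ∅ < M.uW w T}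

/-- Individual rationality under the original profile. -/
def IR (M : Market F W) (μ : Matching F W) : Prop :=
  (∀ f, M.Cf f (μ.fm f) = μ.fm f) ∧ (∀ w, M.Cw w (μ.wm w) = μ.wm w)

/-- `(f,w)` blocks `μ` under the original profile. -/
def Blocks (M : Market F W) (μ : Matching F W) (f : F) (w : W) : Prop :=
  w ∉ μ.fm f ∧ w ∈ M.Cf f (insert w (μ.fm f)) ∧ f ∈ M.Cw w (insert f (μ.wm w))

/-- Stability under the original profile. -/
def Stable (M : Market F W) (μ : Matching F W) : Prop :=
  M.IR μ ∧ ∀ f w, ¬ M.Blocks μ f w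

/-- Blair's partial order for firm `f`: `S ⪰_f S'` iff `C_f (S ∪ S') = S`. -/
def blairF (M : Market F W) (f : F) (S S' : Finset W) : Prop := M.Cf f (S ∪ S') = S

/-- Blair's partial order for worker `w`. -/
def blairW (M : Market F W) (w : W) (S S' : Finset F) : Prop := M.Cw w (S ∪ S') = S

/-- The unanimous Blair order for the firms' side: `μ ⪰_F μ'`. -/
def geF (M : Market F W) (μ μ' : Matching F W) : Prop := ∀ f, M.blairF f (μ.fm f) (μ'.fm f)

/-- The unanimous Blair order for the workers' side: `μ ⪰_W μ'`. -/
def geW (M : Market F W) (μ μ' : Matching F W) : Prop := ∀ w, M.blairW w (μ.wm w) (μ'.wm w)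

/-- Strict unanimous Blair order for the firms' side: `μ ≻_F μ'`. -/
def gtF (M : Market F W) (μ μ' : Matching F W) : Prop := M.geF μ μ' ∧ μ ≠ μ'

/-- Workers deleted from `f`'s list in Step 1(a) of the reduction procedure:
those belonging to some `W' ≻_f μ(f)` but not to `μ(f)`. -/
def D1 (M : Market F W) (μ : Matching F W) (f : F) : Set W :=
  {x | ∃ W' : Finset W, (M.Cf f (W' ∪ μ.fm f) = W' ∧ W' ≠ μ.fm f) ∧ x ∈ W' ∧ x ∉ μ.fm f}

/-- Workers deleted from `f`'s list in Step 2(a): those belonging to some `W'` with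
`μ̃(f) ≻_f W'` but not to `μ̃(f)`. -/
def D2 (M : Market F W) (μt : Matching F W) (f : F) : Set W :=
  {x | ∃ W' : Finset W, (M.Cf f (μt.fm f ∪ W') = μt.fm f ∧ μt.fm f ≠ W') ∧ x ∈ W' ∧ x ∉ μt.fm f}

/-- Firms deleted from `w`'s list in Step 1(b). -/
def E1 (M : Market F W) (μt : Matching F W) (w : W) : Set F :=
  {x | ∃ F' : Finset F, (M.Cw w (F' ∪ μt.wm w) = F' ∧ F' ≠ μt.wm w) ∧ x ∈ F' ∧ x ∉ μt.wm w}

/-- Firms deleted from `w`'s list in Step 2(b). -/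
def E2 (M : Market F W) (μ : Matching F W) (w : W) : Set F :=
  {x | ∃ F' : Finset F, (M.Cw w (μ.wm w ∪ F') = μ.wm w ∧ μ.wm w ≠ F') ∧ x ∈ F' ∧ x ∉ μ.wm w}

/-- Workers deleted from `f`'s list in Step 3: those workers `w` for which `{f}` is no
longer on `w`'s list after Steps 1 and 2 (either `{f}` was never acceptable to `w`, or
`f` was deleted from `w`'s list in Step 1(b) or 2(b)). -/
def D3 (M : Market F W) (μ μt : Matching F W) (f : F) : Set W :=
  {w | ¬ (M.uW w ∅ < M.uW w {f}) ∨ f ∈ M.E1 μt w ∪ M.E2 μ w}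

/-- Firms deleted from `w`'s list in Step 3. -/
def E3 (M : Market F W) (μ μt : Matching F W) (w : W) : Set F :=
  {f | ¬ (M.uF f ∅ < M.uF f {w}) ∨ w ∈ M.D1 μ f ∪ M.D2 μt f}

/-- All workers deleted from `f`'s list in the reduction procedure. -/
def Dall (M : Market F W) (μ μt : Matching F W) (f : F) : Set W :=
  M.D1 μ f ∪ M.D2 μt f ∪ M.D3 μ μt f

/-- All firms deleted from `w`'s list in the reduction procedure. -/
def Eall (M : Market F W) (μ μt : Matching F W) (w : W) : Set F :=
  M.E1 μt w ∪ M.E2 μ w ∪ M.E3 μ μt w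

/-- The family of sets surviving in `f`'s list under the reduced profile `P^{μ,μ̃}`:
originally acceptable sets containing no deleted worker. -/
def RAf (M : Market F W) (μ μt : Matching F W) (f : F) : Set (Finset W) :=
  {T | M.uF f ∅ < M.uF f T ∧ ∀ x ∈ T, x ∉ M.Dall μ μt f}

/-- The family of sets surviving in `w`'s list under the reduced profile `P^{μ,μ̃}`. -/
def RAw (M : Market F W) (μ μt : Matching F W) (w : W) : Set (Finset F) :=
  {T | M.uW w ∅ < M.uW w T ∧ ∀ x ∈ T, x ∉ M.Eall μ μt w}

/-- The choice set `C^{μ,μ̃}_f` of firm `f` under the reduced profile. -/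
def Cfred (M : Market F W) (μ μt : Matching F W) (f : F) : Finset W → Finset W :=
  bestIn (M.uF f) (M.RAf μ μt f)

/-- The choice set `C^{μ,μ̃}_w` of worker `w` under the reduced profile. -/
def Cwred (M : Market F W) (μ μt : Matching F W) (w : W) : Finset F → Finset F :=
  bestIn (M.uW w) (M.RAw μ μt w)

/-- Individual rationality under the reduced profile `P^{μ,μ̃}`. -/
def IRred (M : Market F W) (μ μt ν : Matching F W) : Prop :=
  (∀ f, M.Cfred μ μt f (ν.fm f) = ν.fm f) ∧ (∀ w, M.Cwred μ μt w (ν.wm w) = ν.wm w)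

/-- Blocking under the reduced profile `P^{μ,μ̃}`. -/
def Blocksred (M : Market F W) (μ μt ν : Matching F W) (f : F) (w : W) : Prop :=
  w ∉ ν.fm f ∧ w ∈ M.Cfred μ μt f (insert w (ν.fm f)) ∧
    f ∈ M.Cwred μ μt w (insert f (ν.wm w))

/-- Stability under the reduced profile `P^{μ,μ̃}`. -/
def Stablered (M : Market F W) (μ μt ν : Matching F W) : Prop :=
  M.IRred μ μt ν ∧ ∀ f w, ¬ M.Blocksred μ μt ν f w

/-- The unanimous Blair order on the firms' side computed with the reduced choice sets. -/
def geFred (M : Market F W) (μ μt ν ν' : Matching F W) : Prop :=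
  ∀ f, M.Cfred μ μt f (ν.fm f ∪ ν'.fm f) = ν.fm f

/-- The unanimous Blair order on the workers' side computed with the reduced choice sets. -/
def geWred (M : Market F W) (μ μt ν ν' : Matching F W) : Prop :=
  ∀ w, M.Cwred μ μt w (ν.wm w ∪ ν'.wm w) = ν.wm w

/-- All preferences in the market are substitutable. -/
def SubstAll (M : Market F W) : Prop :=
  (∀ f, Substitutable (M.Cf f)) ∧ (∀ w, Substitutable (M.Cw w))

/-- All preferences in the market satisfy the law of aggregate demand. -/
def LADAll (M : Market F W) : Prop :=
  (∀ f, LAD (M.Cf f)) ∧ (∀ w, LAD (M.Cw w))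

/-- A cycle for the reduced profile `P^{μ,μ̃}`: an `r`-periodic sequence of worker-firm
pairs `(w_i, f_i)` (indexed cyclically) such that (i) `w_i ∈ μ(f_i) \ μ̃(f_i)`;
(ii) `C^{μ,μ̃}_{f_i}(W \ {w_i}) = (μ(f_i) \ {w_i}) ∪ {w_{i+1}}`; and (iii)
`C^{μ,μ̃}_{w_{i+1}}(μ(w_{i+1}) ∪ {f_i}) = (μ(w_{i+1}) \ {f_{i+1}}) ∪ {f_i}`. -/
def IsCycle [Fintype W] (M : Market F W) (μ μt : Matching F W) (r : ℕ)
    (w : ℕ → W) (f : ℕ → F) : Prop :=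
  0 < r ∧ (∀ i, w (i + r) = w i) ∧ (∀ i, f (i + r) = f i) ∧
  ∀ i, (w i ∈ μ.fm (f i) ∧ w i ∉ μt.fm (f i)) ∧
    M.Cfred μ μt (f i) (Finset.univ \ {w i}) = insert (w (i + 1)) (μ.fm (f i) \ {w i}) ∧
    M.Cwred μ μt (w (i + 1)) (μ.wm (w (i + 1)) ∪ {f i}) =
      insert (f i) (μ.wm (w (i + 1)) \ {f (i + 1)})

/-- The firm-side assignment of the cyclic matching `μ_σ` obtained from the cycle
`σ = (w, f)` of length `r`. -/
def cyclicFm (μ : Matching F W) (r : ℕ) (w : ℕ → W) (f : ℕ → F) (g : F) : Finset W :=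
  if ∃ i ∈ Finset.range r, f i = g then
    (μ.fm g \ ((Finset.range r).filter (fun i => f i = g)).image w) ∪
      ((Finset.range r).filter (fun i => f i = g)).image (fun i => w (i + 1))
  else μ.fm g

/-- `ν` is a cyclic matching under the reduced profile `P^{μ,μ̃}`: `ν = μ_σ` for some
cycle `σ` for `P^{μ,μ̃}` (the worker side of `ν` is determined by consistency). -/
def IsCyclicMatching [Fintype W] (M : Market F W) (μ μt ν : Matching F W) : Prop :=
  ∃ (r : ℕ) (w : ℕ → W) (f : ℕ → F),
    M.IsCycle μ μt r w f ∧ ∀ g, ν.fm g = cyclicFm μ r w f g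

end Market

section AuxBest

variable {α : Type*}

lemma bestIn_spec (u : Finset α → ℕ) (A : Set (Finset α)) (S : Finset α) :
    bestIn u A S ∈ (S.powerset).filter (fun T => T ∈ A ∨ T = ∅) ∧
    ∀ T' ∈ (S.powerset).filter (fun T => T ∈ A ∨ T = ∅), u T' ≤ u (bestIn u A S) := by
  classical
  have h : ∃ T ∈ (S.powerset).filter (fun T => T ∈ A ∨ T = ∅),
      ∀ T' ∈ (S.powerset).filter (fun T => T ∈ A ∨ T = ∅), u T' ≤ u T :=
    Finset.exists_max_image _ u ⟨∅, by simp⟩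
  exact h.choose_spec

lemma bestIn_congr {u : Finset α → ℕ} (hu : Function.Injective u)
    {A A' : Set (Finset α)} {S S' : Finset α}
    (h : (S.powerset).filter (fun T => T ∈ A ∨ T = ∅) =
      (S'.powerset).filter (fun T => T ∈ A' ∨ T = ∅)) :
    bestIn u A S = bestIn u A' S' := by
  obtain ⟨m1, x1⟩ := bestIn_spec u A S
  obtain ⟨m2, x2⟩ := bestIn_spec u A' S'
  exact hu (le_antisymm (x2 _ (h ▸ m1)) (x1 _ (h.symm ▸ m2)))

end AuxBest

section AuxRed

variable {F W : Type*} [DecidableEq F] [DecidableEq W]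

lemma Cfred_eq (M : Market F W) (μ μt : Matching F W) (f : F) (S : Finset W) :
    M.Cfred μ μt f S =
      M.Cf f (S.filter (fun x => x ∉ M.Dall μ μt f)) := by
  apply bestIn_congr (M.injF f)
  ext T
  simp only [Finset.mem_filter, Finset.mem_powerset, Market.RAf, Set.mem_setOf_eq]
  constructor
  · rintro ⟨hTS, h | rfl⟩
    · exact ⟨fun x hx => Finset.mem_filter.2 ⟨hTS hx, h.2 x hx⟩, Or.inl h.1⟩
    · exact ⟨by simp, Or.inr rfl⟩
  · rintro ⟨hTS, h | rfl⟩
    · exact ⟨fun x hx => (Finset.mem_filter.1 (hTS hx)).1,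
        Or.inl ⟨h, fun x hx => (Finset.mem_filter.1 (hTS hx)).2⟩⟩
    · exact ⟨by simp, Or.inr rfl⟩

lemma Cwred_eq (M : Market F W) (μ μt : Matching F W) (w : W) (S : Finset F) :
    M.Cwred μ μt w S =
      M.Cw w (S.filter (fun x => x ∉ M.Eall μ μt w)) := by
  apply bestIn_congr (M.injW w)
  ext T
  simp only [Finset.mem_filter, Finset.mem_powerset, Market.RAw, Set.mem_setOf_eq]
  constructor
  · rintro ⟨hTS, h | rfl⟩
    · exact ⟨fun x hx => Finset.mem_filter.2 ⟨hTS hx, h.2 x hx⟩, Or.inl h.1⟩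
    · exact ⟨by simp, Or.inr rfl⟩
  · rintro ⟨hTS, h | rfl⟩
    · exact ⟨fun x hx => (Finset.mem_filter.1 (hTS hx)).1,
        Or.inl ⟨h, fun x hx => (Finset.mem_filter.1 (hTS hx)).2⟩⟩
    · exact ⟨by simp, Or.inr rfl⟩

lemma bestIn_subset (u : Finset α → ℕ) (A : Set (Finset α)) (S : Finset α) :
    bestIn u A S ⊆ S := by
  have := (bestIn_spec u A S).1
  exact Finset.mem_powerset.1 (Finset.mem_filter.1 this).1

/-- Transfer of substitutability and LAD through a filter-composition. -/
lemma transfer {α : Type*} [DecidableEq α] (C : Finset α → Finset α)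
    (hC : ∀ S, C S ⊆ S) (p : α → Prop) [DecidablePred p] (C' : Finset α → Finset α)
    (hC' : ∀ S, C' S = C (S.filter p)) :
    (Substitutable C → Substitutable C') ∧ (LAD C → LAD C') := by
  constructor
  · intro hs S S' b hsub hb
    rw [hC'] at hb ⊢
    have hbp : b ∈ S.filter p := hC _ hb
    have hpb : p b := (Finset.mem_filter.1 hbp).2
    rw [Finset.filter_insert, if_pos hpb]
    exact hs _ _ b (Finset.filter_subset_filter _ hsub) hb
  · intro hl S' S hsub
    rw [hC', hC']
    exact hl _ _ (Finset.filter_subset_filter _ hsub)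

end AuxRed

/-- Lemma 1. Let `μ` and `μ̃` be stable matchings of the market and let
`a` be any agent. If `P_a` is substitutable and satisfies the law of aggregate demand,
then the reduced preference relation `P^{μ,μ̃}_a` is substitutable and satisfies the law
of aggregate demand. -/
theorem reduced_substitutable_lad {F W : Type*} [DecidableEq F] [DecidableEq W]
    (M : Market F W) (μ μt : Matching F W) (hμ : M.Stable μ) (hμt : M.Stable μt) :
    (∀ f : F, Substitutable (M.Cf f) → LAD (M.Cf f) →
        Substitutable (M.Cfred μ μt f) ∧ LAD (M.Cfred μ μt f)) ∧
    (∀ w : W, Substitutable (M.Cw w) → LAD (M.Cw w) →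
        Substitutable (M.Cwred μ μt w) ∧ LAD (M.Cwred μ μt w)) := by
  constructor
  · intro f hs hl
    have hCsub : ∀ S, M.Cf f S ⊆ S := fun S => bestIn_subset _ _ S
    have h := transfer (M.Cf f) hCsub (fun x => x ∉ M.Dall μ μt f)
      (M.Cfred μ μt f) (Cfred_eq M μ μt f)
    exact ⟨h.1 hs, h.2 hl⟩
  · intro w hs hl
    have hCsub : ∀ S, M.Cw w S ⊆ S := fun S => bestIn_subset _ _ S
    have h := transfer (M.Cw w) hCsub (fun x => x ∉ M.Eall μ μt w)
      (M.Cwred μ μt w) (Cwred_eq M μ μt w)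
    exact ⟨h.1 hs, h.2 hl⟩
end
end

section
/- Let all preferences in P be substitutable and let μ and μ̃ be stable matchings with μ ⪰_F μ̃. Then μ(f) is the most preferred subset of workers under f's reduced preference relation, i.e. μ(f) = C^{μ,μ̃}_f(W) for every firm f, and μ̃(w) is the most preferred subset of firms under w's reduced preference relation, i.e. μ̃(w) = C^{μ,μ̃}_w(F) for every worker w. -/
open Finset

noncomputable section

open scoped Classical

namespace Market

variable {F W : Type*} [DecidableEq F] [DecidableEq W]

section AuxBestIn

private lemma bestIn_spec' {α : Type*} (u : Finset α → ℕ) (A : Set (Finset α)) (S : Finset α) :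
    (bestIn u A S ⊆ S ∧ (bestIn u A S ∈ A ∨ bestIn u A S = ∅)) ∧
      ∀ T, T ⊆ S → (T ∈ A ∨ T = ∅) → u T ≤ u (bestIn u A S) := by
  have h : ∃ T ∈ (S.powerset).filter (fun T => T ∈ A ∨ T = ∅),
      ∀ T' ∈ (S.powerset).filter (fun T => T ∈ A ∨ T = ∅), u T' ≤ u T :=
    Finset.exists_max_image _ u ⟨∅, by simp⟩
  have hb : bestIn u A S = h.choose := rfl
  obtain ⟨hmem, hmax⟩ := h.choose_spec
  rw [Finset.mem_filter, Finset.mem_powerset] at hmem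
  refine ⟨⟨hb ▸ hmem.1, hb ▸ hmem.2⟩, fun T hT hTA => ?_⟩
  rw [hb]
  exact hmax T (by rw [Finset.mem_filter, Finset.mem_powerset]; exact ⟨hT, hTA⟩)

private lemma bestIn_eq' {α : Type*} {u : Finset α → ℕ} (hu : Function.Injective u)
    {A : Set (Finset α)} {S X : Finset α} (hXS : X ⊆ S) (hXA : X ∈ A ∨ X = ∅)
    (hmax : ∀ T, T ⊆ S → (T ∈ A ∨ T = ∅) → u T ≤ u X) : bestIn u A S = X := by
  obtain ⟨⟨h1, h2⟩, h3⟩ := bestIn_spec' u A S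
  exact hu (le_antisymm (hmax _ h1 h2) (h3 X hXS hXA))

private lemma bestIn_irc' {α : Type*} {u : Finset α → ℕ} (hu : Function.Injective u)
    {A : Set (Finset α)} {S S'' : Finset α} (h1 : bestIn u A S ⊆ S'') (h2 : S'' ⊆ S) :
    bestIn u A S'' = bestIn u A S := by
  obtain ⟨⟨hs, ha⟩, hm⟩ := bestIn_spec' u A S
  exact bestIn_eq' hu h1 ha (fun T hT hTA => hm T (hT.trans h2) hTA)

end AuxBestIn

lemma Cf_spec' (M : Market F W) (f : F) (S : Finset W) :
    (M.Cf f S ⊆ S ∧ (M.uF f ∅ < M.uF f (M.Cf f S) ∨ M.Cf f S = ∅)) ∧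
      ∀ T, T ⊆ S → (M.uF f ∅ < M.uF f T ∨ T = ∅) → M.uF f T ≤ M.uF f (M.Cf f S) :=
  bestIn_spec' _ _ _

lemma Cw_spec' (M : Market F W) (w : W) (S : Finset F) :
    (M.Cw w S ⊆ S ∧ (M.uW w ∅ < M.uW w (M.Cw w S) ∨ M.Cw w S = ∅)) ∧
      ∀ T, T ⊆ S → (M.uW w ∅ < M.uW w T ∨ T = ∅) → M.uW w T ≤ M.uW w (M.Cw w S) :=
  bestIn_spec' _ _ _

lemma Cf_irc' (M : Market F W) (f : F) {S S'' : Finset W}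
    (h1 : M.Cf f S ⊆ S'') (h2 : S'' ⊆ S) : M.Cf f S'' = M.Cf f S :=
  bestIn_irc' (M.injF f) h1 h2

lemma Cw_irc' (M : Market F W) (w : W) {S S'' : Finset F}
    (h1 : M.Cw w S ⊆ S'') (h2 : S'' ⊆ S) : M.Cw w S'' = M.Cw w S :=
  bestIn_irc' (M.injW w) h1 h2

lemma accF_singleton (M : Market F W) {f : F} (hs : Substitutable (M.Cf f))
    {S : Finset W} {x : W} (hx : x ∈ M.Cf f S) : M.uF f ∅ < M.uF f {x} := by
  have h1 : x ∈ M.Cf f {x} := by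
    have := hs S ∅ x (Finset.empty_subset S) hx
    simpa using this
  have h2 := (M.Cf_spec' f {x}).1
  have h3 : M.Cf f {x} = {x} :=
    Finset.Subset.antisymm h2.1 (Finset.singleton_subset_iff.2 h1)
  rcases h2.2 with h | h
  · rwa [h3] at h
  · rw [h3] at h; simp at h

lemma accW_singleton (M : Market F W) {w : W} (hs : Substitutable (M.Cw w))
    {S : Finset F} {x : F} (hx : x ∈ M.Cw w S) : M.uW w ∅ < M.uW w {x} := by
  have h1 : x ∈ M.Cw w {x} := by
    have := hs S ∅ x (Finset.empty_subset S) hx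
    simpa using this
  have h2 := (M.Cw_spec' w {x}).1
  have h3 : M.Cw w {x} = {x} :=
    Finset.Subset.antisymm h2.1 (Finset.singleton_subset_iff.2 h1)
  rcases h2.2 with h | h
  · rwa [h3] at h
  · rw [h3] at h; simp at h

lemma acc_of_IR_F (M : Market F W) {f : F} {S : Finset W}
    (hIR : M.Cf f S = S) (hne : S ≠ ∅) : M.uF f ∅ < M.uF f S := by
  have := (M.Cf_spec' f S).1.2
  rw [hIR] at this
  tauto

lemma acc_of_IR_W (M : Market F W) {w : W} {S : Finset F}
    (hIR : M.Cw w S = S) (hne : S ≠ ∅) : M.uW w ∅ < M.uW w S := by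
  have := (M.Cw_spec' w S).1.2
  rw [hIR] at this
  tauto

/-- Opposition of interests: `μ ⪰_F μ̃` implies `μ̃ ⪰_W μ`. -/
lemma opposition (M : Market F W) (hsub : M.SubstAll) {μ μt : Matching F W}
    (hμ : M.Stable μ) (hμt : M.Stable μt) (hge : M.geF μ μt) (w : W) :
    M.Cw w (μt.wm w ∪ μ.wm w) = μt.wm w := by
  have hXsub : M.Cw w (μt.wm w ∪ μ.wm w) ⊆ μt.wm w := by
    intro f hf
    by_contra hfn
    have hfμ : f ∈ μ.wm w := by
      have := (M.Cw_spec' w _).1.1 hf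
      rcases Finset.mem_union.1 this with h | h
      · exact absurd h hfn
      · exact h
    have hwμ : w ∈ μ.fm f := (μ.consistent f w).2 hfμ
    have hwμt : w ∉ μt.fm f := fun h => hfn ((μt.consistent f w).1 h)
    have hb1 : w ∈ M.Cf f (insert w (μt.fm f)) := by
      have h1 : w ∈ M.Cf f (μ.fm f ∪ μt.fm f) := by rw [hge f]; exact hwμ
      exact hsub.1 f _ _ w Finset.subset_union_right h1
    have hb2 : f ∈ M.Cw w (insert f (μt.wm w)) :=
      hsub.2 w _ _ f Finset.subset_union_left hf
    exact hμt.2 f w ⟨hwμt, hb1, hb2⟩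
  have h := M.Cw_irc' w hXsub Finset.subset_union_left
  rw [hμt.1.2 w] at h
  exact h.symm

end Market

/-- Remark 1 (i). With substitutable preferences and stable matchings
`μ ⪰_F μ̃`, `μ(f)` is the most preferred subset of workers in `f`'s reduced preference,
i.e. `μ(f) = C^{μ,μ̃}_f(W)`, and `μ̃(w)` is the most preferred subset of firms in `w`'s
reduced preference, i.e. `μ̃(w) = C^{μ,μ̃}_w(F)`. -/
theorem reduced_top_choices {F W : Type*} [DecidableEq F] [DecidableEq W]
    [Fintype F] [Fintype W] (M : Market F W) (hsub : M.SubstAll)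
    (μ μt : Matching F W) (hμ : M.Stable μ) (hμt : M.Stable μt) (hge : M.geF μ μt) :
    (∀ f : F, M.Cfred μ μt f Finset.univ = μ.fm f) ∧
    (∀ w : W, M.Cwred μ μt w Finset.univ = μt.wm w) := by
  have hgeW : ∀ w, M.Cw w (μt.wm w ∪ μ.wm w) = μt.wm w :=
    M.opposition hsub hμ hμt hge
  constructor
  · -- firm side
    intro f
    have hcand : μ.fm f ∈ M.RAf μ μt f ∨ μ.fm f = ∅ := by
      by_cases hE : μ.fm f = ∅
      · exact Or.inr hE
      refine Or.inl ⟨M.acc_of_IR_F (hμ.1.1 f) hE, ?_⟩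
      intro x hx hxd
      simp only [Market.Dall, Set.mem_union] at hxd
      rcases hxd with (hxd | hxd) | hxd
      · obtain ⟨W', _, _, hx'⟩ := hxd
        exact hx' hx
      · obtain ⟨W', ⟨hC, hne⟩, hxW', hxnt⟩ := hxd
        have h1 : x ∈ M.Cf f (insert x (μt.fm f)) := by
          have hxu : x ∈ M.Cf f (μ.fm f ∪ μt.fm f) := by rw [hge f]; exact hx
          exact hsub.1 f _ _ x Finset.subset_union_right hxu
        have h2 : M.Cf f (insert x (μt.fm f)) = μt.fm f := by
          rw [M.Cf_irc' f (S := μt.fm f ∪ W')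
            (by rw [hC]; exact Finset.subset_insert _ _)
            (Finset.insert_subset_iff.2
              ⟨Finset.mem_union_right _ hxW', Finset.subset_union_left⟩), hC]
        rw [h2] at h1
        exact hxnt h1
      · simp only [Market.D3, Set.mem_setOf_eq, Set.mem_union] at hxd
        have hfμ : f ∈ μ.wm x := (μ.consistent f x).1 hx
        rcases hxd with hxd | hxd | hxd
        · refine hxd (M.accW_singleton (hsub.2 x) (S := μ.wm x) ?_)
          rw [hμ.1.2 x]; exact hfμ
        · obtain ⟨F', ⟨hC, hne⟩, hfF', hfnt⟩ := hxd
          have hwμt : x ∉ μt.fm f := fun h => hfnt ((μt.consistent f x).1 h)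
          have hb1 : x ∈ M.Cf f (insert x (μt.fm f)) := by
            have hxu : x ∈ M.Cf f (μ.fm f ∪ μt.fm f) := by rw [hge f]; exact hx
            exact hsub.1 f _ _ x Finset.subset_union_right hxu
          have hb2 : f ∈ M.Cw x (insert f (μt.wm x)) := by
            have hfu : f ∈ M.Cw x (F' ∪ μt.wm x) := by rw [hC]; exact hfF'
            exact hsub.2 x _ _ f Finset.subset_union_right hfu
          exact hμt.2 f x ⟨hwμt, hb1, hb2⟩
        · obtain ⟨F', _, _, hfn⟩ := hxd
          exact hfn hfμ
    refine Market.bestIn_eq' (M.injF f) (Finset.subset_univ _) hcand ?_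
    intro T _ hTA
    rcases hTA with hTR | rfl
    · obtain ⟨hacc, havoid⟩ := hTR
      by_contra hlt
      push_neg at hlt
      have hTle : M.uF f T ≤ M.uF f (M.Cf f (T ∪ μ.fm f)) :=
        (M.Cf_spec' f (T ∪ μ.fm f)).2 T Finset.subset_union_left (Or.inl hacc)
      have hgt : M.uF f (μ.fm f) < M.uF f (M.Cf f (T ∪ μ.fm f)) := lt_of_lt_of_le hlt hTle
      have hWC : M.Cf f (M.Cf f (T ∪ μ.fm f) ∪ μ.fm f) = M.Cf f (T ∪ μ.fm f) := by
        rw [M.Cf_irc' f (S := T ∪ μ.fm f) Finset.subset_union_left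
          (Finset.union_subset ((M.Cf_spec' f _).1.1) Finset.subset_union_right)]
      have hex : ∃ x ∈ M.Cf f (T ∪ μ.fm f), x ∉ μ.fm f := by
        by_contra h
        push_neg at h
        have hle : M.uF f (M.Cf f (T ∪ μ.fm f)) ≤ M.uF f (μ.fm f) := by
          have := (M.Cf_spec' f (μ.fm f)).2 _ h ((M.Cf_spec' f (T ∪ μ.fm f)).1.2)
          rwa [hμ.1.1 f] at this
        exact absurd hgt (not_lt.2 hle)
      obtain ⟨x, hxW', hxnμ⟩ := hex
      have hxT : x ∈ T := by
        rcases Finset.mem_union.1 ((M.Cf_spec' f (T ∪ μ.fm f)).1.1 hxW') with h | h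
        · exact h
        · exact absurd h hxnμ
      have hne : M.Cf f (T ∪ μ.fm f) ≠ μ.fm f := fun h => absurd hgt (by rw [h]; exact lt_irrefl _)
      exact havoid x hxT (Or.inl (Or.inl ⟨_, ⟨hWC, hne⟩, hxW', hxnμ⟩))
    · by_cases hE : μ.fm f = ∅
      · rw [hE]
      · exact le_of_lt (M.acc_of_IR_F (hμ.1.1 f) hE)
  · -- worker side
    intro w
    have hcand : μt.wm w ∈ M.RAw μ μt w ∨ μt.wm w = ∅ := by
      by_cases hE : μt.wm w = ∅
      · exact Or.inr hE
      refine Or.inl ⟨M.acc_of_IR_W (hμt.1.2 w) hE, ?_⟩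
      intro f hf hfd
      simp only [Market.Eall, Set.mem_union] at hfd
      have hwμt : w ∈ μt.fm f := (μt.consistent f w).2 hf
      rcases hfd with (hfd | hfd) | hfd
      · obtain ⟨F', _, _, hf'⟩ := hfd
        exact hf' hf
      · obtain ⟨F', ⟨hC, hne⟩, hfF', hfnμ⟩ := hfd
        have h1 : f ∈ M.Cw w (insert f (μ.wm w)) := by
          have hfu : f ∈ M.Cw w (μt.wm w ∪ μ.wm w) := by rw [hgeW w]; exact hf
          exact hsub.2 w _ _ f Finset.subset_union_right hfu
        have h2 : M.Cw w (insert f (μ.wm w)) = μ.wm w := by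
          rw [M.Cw_irc' w (S := μ.wm w ∪ F')
            (by rw [hC]; exact Finset.subset_insert _ _)
            (Finset.insert_subset_iff.2
              ⟨Finset.mem_union_right _ hfF', Finset.subset_union_left⟩), hC]
        rw [h2] at h1
        exact hfnμ h1
      · simp only [Market.E3, Set.mem_setOf_eq, Set.mem_union] at hfd
        rcases hfd with hfd | hfd | hfd
        · refine hfd (M.accF_singleton (hsub.1 f) (S := μt.fm f) ?_)
          rw [hμt.1.1 f]; exact hwμt
        · obtain ⟨W', ⟨hC, hne⟩, hwW', hwnμ⟩ := hfd
          have hfnμ : w ∉ μ.fm f := hwnμ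
          have hb1 : w ∈ M.Cf f (insert w (μ.fm f)) := by
            have hwu : w ∈ M.Cf f (W' ∪ μ.fm f) := by rw [hC]; exact hwW'
            exact hsub.1 f _ _ w Finset.subset_union_right hwu
          have hb2 : f ∈ M.Cw w (insert f (μ.wm w)) := by
            have hfu : f ∈ M.Cw w (μt.wm w ∪ μ.wm w) := by rw [hgeW w]; exact hf
            exact hsub.2 w _ _ f Finset.subset_union_right hfu
          exact hμ.2 f w ⟨hfnμ, hb1, hb2⟩
        · obtain ⟨W', _, _, hwn⟩ := hfd
          exact hwn hwμt
    refine Market.bestIn_eq' (M.injW w) (Finset.subset_univ _) hcand ?_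
    intro T _ hTA
    rcases hTA with hTR | rfl
    · obtain ⟨hacc, havoid⟩ := hTR
      by_contra hlt
      push_neg at hlt
      have hTle : M.uW w T ≤ M.uW w (M.Cw w (T ∪ μt.wm w)) :=
        (M.Cw_spec' w (T ∪ μt.wm w)).2 T Finset.subset_union_left (Or.inl hacc)
      have hgt : M.uW w (μt.wm w) < M.uW w (M.Cw w (T ∪ μt.wm w)) := lt_of_lt_of_le hlt hTle
      have hWC : M.Cw w (M.Cw w (T ∪ μt.wm w) ∪ μt.wm w) = M.Cw w (T ∪ μt.wm w) := by
        rw [M.Cw_irc' w (S := T ∪ μt.wm w) Finset.subset_union_left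
          (Finset.union_subset ((M.Cw_spec' w _).1.1) Finset.subset_union_right)]
      have hex : ∃ f ∈ M.Cw w (T ∪ μt.wm w), f ∉ μt.wm w := by
        by_contra h
        push_neg at h
        have hle : M.uW w (M.Cw w (T ∪ μt.wm w)) ≤ M.uW w (μt.wm w) := by
          have := (M.Cw_spec' w (μt.wm w)).2 _ h ((M.Cw_spec' w (T ∪ μt.wm w)).1.2)
          rwa [hμt.1.2 w] at this
        exact absurd hgt (not_lt.2 hle)
      obtain ⟨f, hfF', hfnμ⟩ := hex
      have hfT : f ∈ T := by
        rcases Finset.mem_union.1 ((M.Cw_spec' w (T ∪ μt.wm w)).1.1 hfF') with h | h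
        · exact h
        · exact absurd h hfnμ
      have hne : M.Cw w (T ∪ μt.wm w) ≠ μt.wm w := fun h => absurd hgt (by rw [h]; exact lt_irrefl _)
      exact havoid f hfT (Or.inl (Or.inl ⟨_, ⟨hWC, hne⟩, hfF', hfnμ⟩))
    · by_cases hE : μt.wm w = ∅
      · rw [hE]
      · exact le_of_lt (M.acc_of_IR_W (hμt.1.2 w) hE)
end
end

section
/- Let all preferences in P be substitutable and satisfy the law of aggregate demand, and let μ and μ̃ be stable matchings with μ ⪰_F μ̃. Then there exists a cycle for the reduced preference profile P^{μ,μ̃} if and only if μ ≠ μ̃. -/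
open Finset

noncomputable section

open scoped Classical

set_option linter.unusedSectionVars false
section ChoiceLemmas
variable {α : Type*}

structure ChoiceSpec (u : Finset α → ℕ) (A : Set (Finset α)) (C : Finset α → Finset α) : Prop where
  subset : ∀ S, C S ⊆ S
  acc : ∀ S, C S ∈ A ∨ C S = ∅
  max : ∀ S T, T ⊆ S → (T ∈ A ∨ T = ∅) → u T ≤ u (C S)

set_option maxHeartbeats 1000000 in
lemma bestIn_eq_choose (u : Finset α → ℕ) (A : Set (Finset α)) (S : Finset α)
    (h : ∃ T ∈ (S.powerset).filter (fun T => T ∈ A ∨ T = ∅),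
      ∀ T' ∈ (S.powerset).filter (fun T => T ∈ A ∨ T = ∅), u T' ≤ u T) :
    bestIn u A S = h.choose := rfl

lemma bestIn_spec_s9 (u : Finset α → ℕ) (A : Set (Finset α)) :
    ChoiceSpec u A (bestIn u A) := by
  have key : ∀ S : Finset α, bestIn u A S ∈ (S.powerset).filter (fun T => T ∈ A ∨ T = ∅) ∧
      ∀ T' ∈ (S.powerset).filter (fun T => T ∈ A ∨ T = ∅), u T' ≤ u (bestIn u A S) := by
    intro S
    have h : ∃ T ∈ (S.powerset).filter (fun T => T ∈ A ∨ T = ∅),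
        ∀ T' ∈ (S.powerset).filter (fun T => T ∈ A ∨ T = ∅), u T' ≤ u T :=
      Finset.exists_max_image _ u ⟨∅, by simp⟩
    rw [bestIn_eq_choose u A S h]
    exact ⟨h.choose_spec.1, h.choose_spec.2⟩
  refine ⟨fun S => ?_, fun S => ?_, fun S T hTS hTA => ?_⟩
  · exact Finset.mem_powerset.1 (Finset.mem_filter.1 (key S).1).1
  · exact (Finset.mem_filter.1 (key S).1).2
  · exact (key S).2 T (Finset.mem_filter.2 ⟨Finset.mem_powerset.2 hTS, hTA⟩)

variable {u : Finset α → ℕ} {A : Set (Finset α)} {C : Finset α → Finset α}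

lemma choice_eq_of (hu : Function.Injective u) (cs : ChoiceSpec u A C)
    {S X : Finset α} (hXS : X ⊆ S) (hXA : X ∈ A ∨ X = ∅)
    (hmax : ∀ T, T ⊆ S → (T ∈ A ∨ T = ∅) → u T ≤ u X) : C S = X :=
  hu (le_antisymm (hmax (C S) (cs.subset S) (cs.acc S)) (cs.max S X hXS hXA))

/-- irrelevance of rejected contracts -/
lemma choice_irc (hu : Function.Injective u) (cs : ChoiceSpec u A C)
    {S T : Finset α} (h1 : C S ⊆ T) (h2 : T ⊆ S) : C T = C S :=
  choice_eq_of hu cs h1 (cs.acc S) (fun T' hT' hA => cs.max S T' (hT'.trans h2) hA)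

variable [DecidableEq α]

lemma choice_subst' (hsub : Substitutable C) {S S' : Finset α} {a : α}
    (ha : a ∈ C S) (haS' : a ∈ S') (hS' : S' ⊆ S) : a ∈ C S' := by
  have := hsub S (S'.erase a) a ((Finset.erase_subset _ _).trans hS') ha
  rwa [Finset.insert_erase haS'] at this

/-- path independence -/
lemma choice_pi (hu : Function.Injective u) (cs : ChoiceSpec u A C)
    (hsub : Substitutable C) (X Y : Finset α) : C (C X ∪ Y) = C (X ∪ Y) := by
  have hsubs : C (X ∪ Y) ⊆ C X ∪ Y := by
    intro b hb
    by_cases hbY : b ∈ Y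
    · exact Finset.mem_union_right _ hbY
    · have hbX : b ∈ X := by
        have := cs.subset _ hb
        rcases Finset.mem_union.1 this with h | h
        · exact h
        · exact absurd h hbY
      exact Finset.mem_union_left _
        (choice_subst' hsub hb hbX Finset.subset_union_left)
  exact choice_irc hu cs hsubs (Finset.union_subset_union_left (cs.subset X))

lemma choice_idem (hu : Function.Injective u) (cs : ChoiceSpec u A C)
    (S : Finset α) : C (C S) = C S :=
  choice_irc hu cs (Finset.Subset.refl _) (cs.subset S)

lemma choice_singleton (hsub : Substitutable C) (cs : ChoiceSpec u A C)
    {a : α} {S : Finset α} (ha : a ∈ C S) : C {a} = {a} := by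
  have h1 : a ∈ C {a} :=
    choice_subst' hsub ha (Finset.mem_singleton_self a)
      (Finset.singleton_subset_iff.2 (cs.subset S ha))
  exact Finset.Subset.antisymm (cs.subset _) (Finset.singleton_subset_iff.2 h1)

lemma choice_singleton_acc (hsub : Substitutable C) (cs : ChoiceSpec u A C)
    {a : α} {S : Finset α} (ha : a ∈ C S) : ({a} : Finset α) ∈ A := by
  have h := cs.acc {a}
  rw [choice_singleton hsub cs ha] at h
  rcases h with h | h
  · exact h
  · exact absurd h (Finset.singleton_ne_empty a)

end ChoiceLemmas
namespace Market
section Main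
variable {F W : Type*} [DecidableEq F] [DecidableEq W] [Fintype W]
variable {M : Market F W} {μ μt : Matching F W}

lemma cf_spec (M : Market F W) (f : F) :
    ChoiceSpec (M.uF f) {T | M.uF f ∅ < M.uF f T} (M.Cf f) := bestIn_spec_s9 _ _

lemma cw_spec (M : Market F W) (w : W) :
    ChoiceSpec (M.uW w) {T | M.uW w ∅ < M.uW w T} (M.Cw w) := bestIn_spec_s9 _ _

lemma cfred_spec (M : Market F W) (μ μt : Matching F W) (f : F) :
    ChoiceSpec (M.uF f) (M.RAf μ μt f) (M.Cfred μ μt f) := bestIn_spec_s9 _ _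

lemma cwred_spec (M : Market F W) (μ μt : Matching F W) (w : W) :
    ChoiceSpec (M.uW w) (M.RAw μ μt w) (M.Cwred μ μt w) := bestIn_spec_s9 _ _

lemma sum_cards (ν : Matching F W) (F0 : Finset F) (hF0 : ∀ w, ν.wm w ⊆ F0) :
    ∑ f ∈ F0, (ν.fm f).card = ∑ w : W, (ν.wm w).card := by
  have h1 : ∀ f, (ν.fm f).card = ∑ w : W, if w ∈ ν.fm f then 1 else 0 := by
    intro f
    rw [← Finset.card_filter]
    congr 1
    ext x
    simp
  have h2 : ∀ w, (ν.wm w).card = ∑ f ∈ F0, if f ∈ ν.wm w then 1 else 0 := by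
    intro w
    rw [← Finset.card_filter]
    congr 1
    ext x
    simp only [Finset.mem_filter]
    exact ⟨fun h => ⟨hF0 w h, h⟩, fun h => h.2⟩
  simp only [h1, h2]
  rw [Finset.sum_comm]
  apply Finset.sum_congr rfl
  intro w _
  apply Finset.sum_congr rfl
  intro f _
  congr 1
  simp only [eq_iff_iff]
  exact ν.consistent f w

variable (hsub : M.SubstAll) (hlad : M.LADAll) (hμ : M.Stable μ) (hμt : M.Stable μt)
  (hge : M.geF μ μt)

include hsub hlad hμ hμt hge

lemma decomp : ∀ w, M.Cw w (μt.wm w ∪ μ.wm w) = μt.wm w := by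
  intro w
  have cw := cw_spec M w
  set Y := M.Cw w (μt.wm w ∪ μ.wm w) with hY
  have hYsub : Y ⊆ μt.wm w := by
    intro g hg
    by_contra hgB
    have hgU : g ∈ μt.wm w ∪ μ.wm w := cw.subset _ hg
    have hgμ : g ∈ μ.wm w := by
      rcases Finset.mem_union.1 hgU with h | h
      · exact absurd h hgB
      · exact h
    have hwfm : w ∈ μ.fm g := (μ.consistent g w).2 hgμ
    have hgeEq : M.Cf g (μ.fm g ∪ μt.fm g) = μ.fm g := hge g
    have hwceq : w ∈ M.Cf g (μ.fm g ∪ μt.fm g) := by rw [hgeEq]; exact hwfm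
    have h1 : w ∈ M.Cf g (insert w (μt.fm g)) :=
      choice_subst' (hsub.1 g) hwceq (Finset.mem_insert_self _ _)
        (Finset.insert_subset (Finset.mem_union_left _ hwfm)
          (fun x hx => Finset.mem_union_right _ hx))
    have h2 : g ∈ M.Cw w (insert g (μt.wm w)) :=
      choice_subst' (hsub.2 w) hg (Finset.mem_insert_self _ _)
        (Finset.insert_subset (Finset.mem_union_right _ hgμ)
          (fun x hx => Finset.mem_union_left _ hx))
    exact hμt.2 g w ⟨fun h => hgB ((μt.consistent g w).1 h), h1, h2⟩
  have : M.Cw w (μt.wm w) = Y :=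
    choice_irc (M.injW w) cw hYsub Finset.subset_union_left
  rw [hμt.1.2 w] at this
  exact this.symm

lemma cardF_le : ∀ f, (μt.fm f).card ≤ (μ.fm f).card := by
  intro f
  have h := hlad.1 f (μt.fm f) (μ.fm f ∪ μt.fm f) Finset.subset_union_right
  rwa [hμt.1.1 f, (hge f : M.Cf f (μ.fm f ∪ μt.fm f) = μ.fm f)] at h

lemma cardW_le : ∀ w, (μ.wm w).card ≤ (μt.wm w).card := by
  intro w
  have h := hlad.2 w (μ.wm w) (μt.wm w ∪ μ.wm w) Finset.subset_union_right
  rwa [hμ.1.2 w, decomp hsub hlad hμ hμt hge w] at h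

lemma cards_eq :
    (∀ f, (μt.fm f).card = (μ.fm f).card) ∧ ∀ w, (μ.wm w).card = (μt.wm w).card := by
  classical
  set F0 : Finset F := Finset.univ.biUnion (fun w => μ.wm w ∪ μt.wm w) with hF0def
  have hμF0 : ∀ w, μ.wm w ⊆ F0 := by
    intro w g hg
    exact Finset.mem_biUnion.2 ⟨w, Finset.mem_univ w, Finset.mem_union_left _ hg⟩
  have hμtF0 : ∀ w, μt.wm w ⊆ F0 := by
    intro w g hg
    exact Finset.mem_biUnion.2 ⟨w, Finset.mem_univ w, Finset.mem_union_right _ hg⟩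
  have s1 := sum_cards μ F0 hμF0
  have s2 := sum_cards μt F0 hμtF0
  have hsum1 : ∑ f ∈ F0, (μt.fm f).card ≤ ∑ f ∈ F0, (μ.fm f).card :=
    Finset.sum_le_sum (fun f _ => cardF_le hsub hlad hμ hμt hge f)
  have hsum2 : ∑ w : W, (μ.wm w).card ≤ ∑ w : W, (μt.wm w).card :=
    Finset.sum_le_sum (fun w _ => cardW_le hsub hlad hμ hμt hge w)
  have hEq : ∑ f ∈ F0, (μt.fm f).card = ∑ f ∈ F0, (μ.fm f).card := by
    have := s1 ▸ s2 ▸ hsum2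
    omega
  have hEqW : ∑ w : W, (μ.wm w).card = ∑ w : W, (μt.wm w).card := by
    rw [← s1, ← s2] at *
    omega
  constructor
  · intro f
    by_cases hf : f ∈ F0
    · exact ((Finset.sum_eq_sum_iff_of_le (fun i _ => cardF_le hsub hlad hμ hμt hge i)).1 hEq) f hf
    · have e1 : μ.fm f = ∅ := by
        rw [Finset.eq_empty_iff_forall_notMem]
        intro w hw
        exact hf (hμF0 w ((μ.consistent f w).1 hw))
      have e2 : μt.fm f = ∅ := by
        rw [Finset.eq_empty_iff_forall_notMem]
        intro w hw
        exact hf (hμtF0 w ((μt.consistent f w).1 hw))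
      rw [e1, e2]
  · intro w
    exact ((Finset.sum_eq_sum_iff_of_le (fun i _ => cardW_le hsub hlad hμ hμt hge i)).1
      hEqW) w (Finset.mem_univ w)

end Main
end Market
namespace Market
section Deletions
variable {F W : Type*} [DecidableEq F] [DecidableEq W] [Fintype W]
variable {M : Market F W} {μ μt : Matching F W}
variable (hsub : M.SubstAll) (hlad : M.LADAll) (hμ : M.Stable μ) (hμt : M.Stable μt)
  (hge : M.geF μ μt)

include hsub hlad hμ hμt hge

lemma notE1_of_mu {w : W} {g : F} (hgμ : g ∈ μ.wm w) : g ∉ M.E1 μt w := by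
  rintro ⟨F', ⟨hC, hne⟩, hgF', hgmt⟩
  have hgC : g ∈ M.Cw w (F' ∪ μt.wm w) := by rw [hC]; exact hgF'
  have h2 : g ∈ M.Cw w (insert g (μt.wm w)) :=
    choice_subst' (hsub.2 w) hgC (Finset.mem_insert_self _ _)
      (Finset.insert_subset (Finset.mem_union_left _ hgF')
        (fun x hx => Finset.mem_union_right _ hx))
  have hwfm : w ∈ μ.fm g := (μ.consistent g w).2 hgμ
  have hwc : w ∈ M.Cf g (μ.fm g ∪ μt.fm g) := by
    rw [(hge g : M.Cf g (μ.fm g ∪ μt.fm g) = μ.fm g)]; exact hwfm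
  have h1 : w ∈ M.Cf g (insert w (μt.fm g)) :=
    choice_subst' (hsub.1 g) hwc (Finset.mem_insert_self _ _)
      (Finset.insert_subset (Finset.mem_union_left _ hwfm)
        (fun x hx => Finset.mem_union_right _ hx))
  exact hμt.2 g w ⟨fun h => hgmt ((μt.consistent g w).1 h), h1, h2⟩

lemma notE2_of_mu {w : W} {g : F} (hgμ : g ∈ μ.wm w) : g ∉ M.E2 μ w := by
  rintro ⟨F', _, _, hx⟩
  exact hx hgμ

lemma notE1_of_mut {w : W} {g : F} (h : g ∈ μt.wm w) : g ∉ M.E1 μt w := by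
  rintro ⟨F', _, _, hx⟩
  exact hx h

lemma notE2_of_mut {w : W} {g : F} (hgmt : g ∈ μt.wm w) : g ∉ M.E2 μ w := by
  rintro ⟨F', ⟨hC, hne⟩, hgF', hgμ⟩
  have hpi := choice_pi (M.injW w) (cw_spec M w) (hsub.2 w) (μ.wm w ∪ F') (μt.wm w)
  rw [hC] at hpi
  have hd : M.Cw w (μ.wm w ∪ μt.wm w) = μt.wm w := by
    rw [Finset.union_comm]; exact decomp hsub hlad hμ hμt hge w
  rw [hd] at hpi
  have hg2 : g ∈ M.Cw w (μ.wm w ∪ F' ∪ μt.wm w) := by rw [← hpi]; exact hgmt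
  have hg3 : g ∈ M.Cw w (μ.wm w ∪ F') :=
    choice_subst' (hsub.2 w) hg2 (Finset.mem_union_right _ hgF') Finset.subset_union_left
  rw [hC] at hg3
  exact hgμ hg3

lemma notE3_of_mu {w : W} {g : F} (hgμ : g ∈ μ.wm w) : g ∉ M.E3 μ μt w := by
  have hwfm : w ∈ μ.fm g := (μ.consistent g w).2 hgμ
  rintro (hacc | hD)
  · have hwc : w ∈ M.Cf g (μ.fm g) := by rw [hμ.1.1 g]; exact hwfm
    exact hacc (choice_singleton_acc (hsub.1 g) (cf_spec M g) hwc)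
  · rcases hD with hD1 | hD2
    · obtain ⟨W', _, _, hx⟩ := hD1
      exact hx hwfm
    · obtain ⟨W', ⟨hC, hne⟩, hwW', hwB⟩ := hD2
      have hpi := choice_pi (M.injF g) (cf_spec M g) (hsub.1 g) (μt.fm g ∪ W') (μ.fm g)
      rw [hC] at hpi
      have hd : M.Cf g (μt.fm g ∪ μ.fm g) = μ.fm g := by
        rw [Finset.union_comm]; exact hge g
      rw [hd] at hpi
      have hw2 : w ∈ M.Cf g (μt.fm g ∪ W' ∪ μ.fm g) := by rw [← hpi]; exact hwfm
      have hw3 : w ∈ M.Cf g (μt.fm g ∪ W') :=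
        choice_subst' (hsub.1 g) hw2 (Finset.mem_union_right _ hwW') Finset.subset_union_left
      rw [hC] at hw3
      exact hwB hw3

lemma notE3_of_mut {w : W} {g : F} (hgmt : g ∈ μt.wm w) : g ∉ M.E3 μ μt w := by
  have hwfm : w ∈ μt.fm g := (μt.consistent g w).2 hgmt
  rintro (hacc | hD)
  · have hwc : w ∈ M.Cf g (μt.fm g) := by rw [hμt.1.1 g]; exact hwfm
    exact hacc (choice_singleton_acc (hsub.1 g) (cf_spec M g) hwc)
  · rcases hD with hD1 | hD2
    · obtain ⟨W', ⟨hC, hne⟩, hwW', hwA⟩ := hD1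
      have hwc : w ∈ M.Cf g (W' ∪ μ.fm g) := by rw [hC]; exact hwW'
      have h1 : w ∈ M.Cf g (insert w (μ.fm g)) :=
        choice_subst' (hsub.1 g) hwc (Finset.mem_insert_self _ _)
          (Finset.insert_subset (Finset.mem_union_left _ hwW')
            (fun x hx => Finset.mem_union_right _ hx))
      have hgd : g ∈ M.Cw w (μt.wm w ∪ μ.wm w) := by
        rw [decomp hsub hlad hμ hμt hge w]; exact hgmt
      have h2 : g ∈ M.Cw w (insert g (μ.wm w)) :=
        choice_subst' (hsub.2 w) hgd (Finset.mem_insert_self _ _)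
          (Finset.insert_subset (Finset.mem_union_left _ hgmt)
            (fun x hx => Finset.mem_union_right _ hx))
      exact hμ.2 g w ⟨hwA, h1, h2⟩
    · obtain ⟨W', _, _, hx⟩ := hD2
      exact hx hwfm

lemma notD1_of_B {f : F} {w : W} (hB : w ∈ μt.fm f) : w ∉ M.D1 μ f := by
  rintro ⟨W', ⟨hC, hne⟩, hwW', hwA⟩
  have hwc : w ∈ M.Cf f (W' ∪ μ.fm f) := by rw [hC]; exact hwW'
  have h1 : w ∈ M.Cf f (insert w (μ.fm f)) :=
    choice_subst' (hsub.1 f) hwc (Finset.mem_insert_self _ _)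
      (Finset.insert_subset (Finset.mem_union_left _ hwW')
        (fun x hx => Finset.mem_union_right _ hx))
  have hfmt : f ∈ μt.wm w := (μt.consistent f w).1 hB
  have hgd : f ∈ M.Cw w (μt.wm w ∪ μ.wm w) := by
    rw [decomp hsub hlad hμ hμt hge w]; exact hfmt
  have h2 : f ∈ M.Cw w (insert f (μ.wm w)) :=
    choice_subst' (hsub.2 w) hgd (Finset.mem_insert_self _ _)
      (Finset.insert_subset (Finset.mem_union_left _ hfmt)
        (fun x hx => Finset.mem_union_right _ hx))
  exact hμ.2 f w ⟨hwA, h1, h2⟩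

lemma notD2_of_A {f : F} {w : W} (hA : w ∈ μ.fm f) : w ∉ M.D2 μt f := by
  rintro ⟨W', ⟨hC, hne⟩, hwW', hwB⟩
  have hpi := choice_pi (M.injF f) (cf_spec M f) (hsub.1 f) (μt.fm f ∪ W') (μ.fm f)
  rw [hC] at hpi
  have hd : M.Cf f (μt.fm f ∪ μ.fm f) = μ.fm f := by
    rw [Finset.union_comm]; exact hge f
  rw [hd] at hpi
  have hw2 : w ∈ M.Cf f (μt.fm f ∪ W' ∪ μ.fm f) := by rw [← hpi]; exact hA
  have hw3 : w ∈ M.Cf f (μt.fm f ∪ W') :=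
    choice_subst' (hsub.1 f) hw2 (Finset.mem_union_right _ hwW') Finset.subset_union_left
  rw [hC] at hw3
  exact hwB hw3

lemma notD3_of_A {f : F} {w : W} (hA : w ∈ μ.fm f) : w ∉ M.D3 μ μt f := by
  have hfμ : f ∈ μ.wm w := (μ.consistent f w).1 hA
  rintro (hacc | hE)
  · have hfc : f ∈ M.Cw w (μ.wm w) := by rw [hμ.1.2 w]; exact hfμ
    exact hacc (choice_singleton_acc (hsub.2 w) (cw_spec M w) hfc)
  · rcases hE with h1 | h2
    · exact notE1_of_mu hsub hlad hμ hμt hge hfμ h1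
    · exact notE2_of_mu hsub hlad hμ hμt hge hfμ h2

lemma notD3_of_B {f : F} {w : W} (hB : w ∈ μt.fm f) : w ∉ M.D3 μ μt f := by
  have hfμt : f ∈ μt.wm w := (μt.consistent f w).1 hB
  rintro (hacc | hE)
  · have hfc : f ∈ M.Cw w (μt.wm w) := by rw [hμt.1.2 w]; exact hfμt
    exact hacc (choice_singleton_acc (hsub.2 w) (cw_spec M w) hfc)
  · rcases hE with h1 | h2
    · exact notE1_of_mut hsub hlad hμ hμt hge hfμt h1
    · exact notE2_of_mut hsub hlad hμ hμt hge hfμt h2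

lemma goodA {f : F} {w : W} (hA : w ∈ μ.fm f) : w ∉ M.Dall μ μt f := by
  rintro ((h | h) | h)
  · obtain ⟨W', _, _, hx⟩ := h
    exact hx hA
  · exact notD2_of_A hsub hlad hμ hμt hge hA h
  · exact notD3_of_A hsub hlad hμ hμt hge hA h

lemma goodB {f : F} {w : W} (hB : w ∈ μt.fm f) : w ∉ M.Dall μ μt f := by
  rintro ((h | h) | h)
  · exact notD1_of_B hsub hlad hμ hμt hge hB h
  · obtain ⟨W', _, _, hx⟩ := h
    exact hx hB
  · exact notD3_of_B hsub hlad hμ hμt hge hB h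

lemma goodWμ {w : W} {g : F} (hg : g ∈ μ.wm w) : g ∉ M.Eall μ μt w := by
  rintro ((h | h) | h)
  · exact notE1_of_mu hsub hlad hμ hμt hge hg h
  · exact notE2_of_mu hsub hlad hμ hμt hge hg h
  · exact notE3_of_mu hsub hlad hμ hμt hge hg h

lemma goodWμt {w : W} {g : F} (hg : g ∈ μt.wm w) : g ∉ M.Eall μ μt w := by
  rintro ((h | h) | h)
  · exact notE1_of_mut hsub hlad hμ hμt hge hg h
  · exact notE2_of_mut hsub hlad hμ hμt hge hg h
  · exact notE3_of_mut hsub hlad hμ hμt hge hg h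

end Deletions
end Market
namespace Market
section Reduced
variable {F W : Type*} [DecidableEq F] [DecidableEq W] [Fintype W]
variable {M : Market F W} {μ μt : Matching F W}

lemma Cfred_eq_filter (f : F) (S : Finset W) :
    M.Cfred μ μt f S = M.Cf f (S.filter (fun x => x ∉ M.Dall μ μt f)) := by
  have cf := cf_spec M f
  apply choice_eq_of (M.injF f) (cfred_spec M μ μt f)
  · exact (cf.subset _).trans (Finset.filter_subset _ _)
  · rcases cf.acc (S.filter (fun x => x ∉ M.Dall μ μt f)) with h | h
    · exact Or.inl ⟨h, fun x hx => (Finset.mem_filter.1 (cf.subset _ hx)).2⟩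
    · exact Or.inr h
  · intro T hTS hTA
    rcases hTA with hT | rfl
    · exact cf.max _ T (fun x hx => Finset.mem_filter.2 ⟨hTS hx, hT.2 x hx⟩) (Or.inl hT.1)
    · exact cf.max _ ∅ (Finset.empty_subset _) (Or.inr rfl)

lemma Cwred_eq_filter (w : W) (S : Finset F) :
    M.Cwred μ μt w S = M.Cw w (S.filter (fun x => x ∉ M.Eall μ μt w)) := by
  have cw := cw_spec M w
  apply choice_eq_of (M.injW w) (cwred_spec M μ μt w)
  · exact (cw.subset _).trans (Finset.filter_subset _ _)
  · rcases cw.acc (S.filter (fun x => x ∉ M.Eall μ μt w)) with h | h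
    · exact Or.inl ⟨h, fun x hx => (Finset.mem_filter.1 (cw.subset _ hx)).2⟩
    · exact Or.inr h
  · intro T hTS hTA
    rcases hTA with hT | rfl
    · exact cw.max _ T (fun x hx => Finset.mem_filter.2 ⟨hTS hx, hT.2 x hx⟩) (Or.inl hT.1)
    · exact cw.max _ ∅ (Finset.empty_subset _) (Or.inr rfl)

variable (hsub : M.SubstAll) (hlad : M.LADAll) (hμ : M.Stable μ) (hμt : M.Stable μt)
  (hge : M.geF μ μt)

include hsub hlad hμ hμt hge

lemma key_step {f : F} {w : W} (hA : w ∈ μ.fm f) (hB : w ∉ μt.fm f) :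
    ∃ f' w', (w' ∈ μ.fm f' ∧ w' ∉ μt.fm f') ∧
      M.Cfred μ μt f (Finset.univ \ {w}) = insert w' (μ.fm f \ {w}) ∧
      M.Cwred μ μt w' (μ.wm w' ∪ {f}) = insert f (μ.wm w' \ {f'}) := by
  classical
  have cf := cf_spec M f
  have inj := M.injF f
  have csub := hsub.1 f
  set Wg : Finset W := Finset.univ.filter (fun x => x ∉ M.Dall μ μt f) with hWg
  have hAWg : μ.fm f ⊆ Wg := fun x hx =>
    Finset.mem_filter.2 ⟨Finset.mem_univ x, goodA hsub hlad hμ hμt hge hx⟩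
  have hBWg : μt.fm f ⊆ Wg := fun x hx =>
    Finset.mem_filter.2 ⟨Finset.mem_univ x, goodB hsub hlad hμ hμt hge hx⟩
  have hAacc : μ.fm f ∈ {T | M.uF f ∅ < M.uF f T} := by
    have h := cf.acc (μ.fm f)
    rw [hμ.1.1 f] at h
    rcases h with h | h
    · exact h
    · exact absurd h (Finset.ne_empty_of_mem hA)
  -- Step 1 : the choice from the surviving set of workers is μ(f)
  have hCWg : M.Cf f Wg = μ.fm f := by
    have hZWg : M.Cf f Wg ⊆ Wg := cf.subset _
    have hup : M.uF f (μ.fm f) ≤ M.uF f (M.Cf f Wg) := cf.max Wg (μ.fm f) hAWg (Or.inl hAacc)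
    have hZacc : M.Cf f Wg ∈ {T | M.uF f ∅ < M.uF f T} := by
      rcases cf.acc Wg with h | h
      · exact h
      · rw [h] at hup
        exact absurd hup (not_le.2 hAacc)
    have hZ'eq : M.Cf f (M.Cf f Wg ∪ μ.fm f) = μ.fm f := by
      by_contra hne
      have hIRC : M.Cf f (M.Cf f (M.Cf f Wg ∪ μ.fm f) ∪ μ.fm f) = M.Cf f (M.Cf f Wg ∪ μ.fm f) :=
        choice_irc inj cf Finset.subset_union_left
          (Finset.union_subset (cf.subset _) Finset.subset_union_right)
      have hsubA : M.Cf f (M.Cf f Wg ∪ μ.fm f) ⊆ μ.fm f := by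
        intro z hz
        by_contra hzA
        have hzZ : z ∈ M.Cf f Wg := by
          rcases Finset.mem_union.1 (cf.subset _ hz) with h | h
          · exact h
          · exact absurd h hzA
        have hzD1 : z ∈ M.D1 μ f := ⟨M.Cf f (M.Cf f Wg ∪ μ.fm f), ⟨hIRC, hne⟩, hz, hzA⟩
        exact (Finset.mem_filter.1 (hZWg hzZ)).2 (Or.inl (Or.inl hzD1))
      have hAZ' : M.Cf f (μ.fm f) = M.Cf f (M.Cf f Wg ∪ μ.fm f) :=
        choice_irc inj cf hsubA Finset.subset_union_right
      rw [hμ.1.1 f] at hAZ'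
      exact hne hAZ'.symm
    have hdn : M.uF f (M.Cf f Wg) ≤ M.uF f (μ.fm f) := by
      have h := cf.max (M.Cf f Wg ∪ μ.fm f) (M.Cf f Wg) Finset.subset_union_left (Or.inl hZacc)
      rwa [hZ'eq] at h
    exact inj (le_antisymm hdn hup)
  have hcards := cards_eq hsub hlad hμ hμt hge
  -- Step 2 : choice from Wg \ {w}
  have hsub1 : μ.fm f \ {w} ⊆ M.Cf f (Wg \ {w}) := by
    intro a ha
    have ha' := Finset.mem_sdiff.1 ha
    have haC : a ∈ M.Cf f Wg := by rw [hCWg]; exact ha'.1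
    exact choice_subst' csub haC
      (Finset.mem_sdiff.2 ⟨hAWg ha'.1, ha'.2⟩) Finset.sdiff_subset
  have hZ1le : (M.Cf f (Wg \ {w})).card ≤ (μ.fm f).card := by
    have h := hlad.1 f (Wg \ {w}) Wg Finset.sdiff_subset
    rwa [hCWg] at h
  have hZ1ge : (μ.fm f).card ≤ (M.Cf f (Wg \ {w})).card := by
    have hBsub : μt.fm f ⊆ Wg \ {w} := fun x hx =>
      Finset.mem_sdiff.2 ⟨hBWg hx, fun hc => hB ((Finset.mem_singleton.1 hc) ▸ hx)⟩
    have h := hlad.1 f (μt.fm f) (Wg \ {w}) hBsub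
    rw [hμt.1.1 f] at h
    exact (hcards.1 f).symm.trans_le h
  have hZ1card : (M.Cf f (Wg \ {w})).card = (μ.fm f).card := le_antisymm hZ1le hZ1ge
  have hAwcard : (μ.fm f \ {w}).card = (μ.fm f).card - 1 := by
    rw [Finset.card_sdiff_of_subset (Finset.singleton_subset_iff.2 hA), Finset.card_singleton]
  have hApos : 0 < (μ.fm f).card := Finset.card_pos.2 ⟨w, hA⟩
  have hdiffcard : ((M.Cf f (Wg \ {w})) \ (μ.fm f \ {w})).card = 1 := by
    rw [Finset.card_sdiff_of_subset hsub1, hZ1card, hAwcard]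
    omega
  obtain ⟨w', hw'⟩ := Finset.card_eq_one.1 hdiffcard
  have hw'mem : w' ∈ M.Cf f (Wg \ {w}) ∧ w' ∉ μ.fm f \ {w} :=
    Finset.mem_sdiff.1 (hw' ▸ Finset.mem_singleton_self w')
  have hw'Wgw : w' ∈ Wg \ {w} := cf.subset _ hw'mem.1
  have hw'ne : w' ≠ w := fun h => (Finset.mem_sdiff.1 hw'Wgw).2 (Finset.mem_singleton.2 h)
  have hw'A : w' ∉ μ.fm f := fun h =>
    hw'mem.2 (Finset.mem_sdiff.2 ⟨h, fun hc => hw'ne (Finset.mem_singleton.1 hc)⟩)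
  have hw'good : w' ∉ M.Dall μ μt f :=
    (Finset.mem_filter.1 ((Finset.mem_sdiff.1 hw'Wgw).1)).2
  have hZ1eq : M.Cf f (Wg \ {w}) = insert w' (μ.fm f \ {w}) := by
    have hu := Finset.union_sdiff_of_subset hsub1
    rw [hw'] at hu
    rw [← hu]
    ext x
    simp only [Finset.mem_union, Finset.mem_insert, Finset.mem_singleton]
    tauto
  -- condition (ii)
  have hfilter : (Finset.univ \ {w}).filter (fun x => x ∉ M.Dall μ μt f) = Wg \ {w} := by
    ext x
    simp only [hWg, Finset.mem_filter, Finset.mem_sdiff, Finset.mem_univ, true_and]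
    tauto
  have hcond2 : M.Cfred μ μt f (Finset.univ \ {w}) = insert w' (μ.fm f \ {w}) := by
    rw [Cfred_eq_filter, hfilter]
    exact hZ1eq
  -- unpack D3-avoidance of w'
  have hw'D3 : w' ∉ M.D3 μ μt f := fun h => hw'good (Or.inr h)
  have hfacc : M.uW w' ∅ < M.uW w' {f} := by
    by_contra h
    exact hw'D3 (Or.inl h)
  have hfE1 : f ∉ M.E1 μt w' := fun h => hw'D3 (Or.inr (Or.inl h))
  have hfE2 : f ∉ M.E2 μ w' := fun h => hw'D3 (Or.inr (Or.inr h))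
  have hfμw' : f ∉ μ.wm w' := fun h => hw'A ((μ.consistent f w').2 h)
  have hunion : μ.wm w' ∪ {f} = insert f (μ.wm w') := by
    ext x; simp only [Finset.mem_union, Finset.mem_insert, Finset.mem_singleton]; tauto
  -- worker side choice Y
  have cw' := cw_spec M w'
  have injw := M.injW w'
  have csubw := hsub.2 w'
  set Y := M.Cw w' (insert f (μ.wm w')) with hYdef
  have hYsub : Y ⊆ insert f (μ.wm w') := cw'.subset _
  have hfY : f ∈ Y := by
    by_contra hf
    have hYsub' : Y ⊆ μ.wm w' := by
      intro x hx
      rcases Finset.mem_insert.1 (hYsub hx) with h | h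
      · exact absurd (h ▸ hx) hf
      · exact h
    have hIR : M.Cw w' (μ.wm w') = Y :=
      choice_irc injw cw' hYsub' (Finset.subset_insert _ _)
    rw [hμ.1.2 w'] at hIR
    have hCE : M.Cw w' (μ.wm w' ∪ {f}) = μ.wm w' := by
      rw [hunion]
      exact hIR.symm
    exact hfE2 ⟨{f}, ⟨hCE, fun hcon => hfμw' (hcon ▸ Finset.mem_singleton_self f)⟩,
      Finset.mem_singleton_self f, hfμw'⟩
  have hCY : M.Cw w' Y = Y := by
    have := choice_irc injw cw' (subset_of_eq hYdef.symm) hYsub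
    rw [← hYdef] at this
    exact this
  -- the choice from Y ∪ μt(w') is μt(w')
  have hYmt : M.Cw w' (Y ∪ μt.wm w') = μt.wm w' := by
    by_cases hfmt : f ∈ μt.wm w'
    · have hset : insert f (μ.wm w') ∪ μt.wm w' = μt.wm w' ∪ μ.wm w' := by
        ext x
        simp only [Finset.mem_union, Finset.mem_insert]
        constructor
        · rintro ((rfl | h) | h)
          · exact Or.inl hfmt
          · exact Or.inr h
          · exact Or.inl h
        · rintro (h | h)
          · exact Or.inr h
          · exact Or.inl (Or.inr h)
      have hpi := choice_pi injw cw' csubw (insert f (μ.wm w')) (μt.wm w')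
      rw [hset, ← hYdef] at hpi
      exact hpi.trans (decomp hsub hlad hμ hμt hge w')
    · have hGsmall : M.Cw w' (insert f (μt.wm w')) = μt.wm w' := by
        by_cases hfG : f ∈ M.Cw w' (insert f (μt.wm w'))
        · exfalso
          have hGsub : M.Cw w' (insert f (μt.wm w')) ⊆ insert f (μt.wm w') := cw'.subset _
          have hIRC : M.Cw w' (M.Cw w' (insert f (μt.wm w')) ∪ μt.wm w')
              = M.Cw w' (insert f (μt.wm w')) :=
            choice_irc injw cw' Finset.subset_union_left
              (Finset.union_subset hGsub (Finset.subset_insert _ _))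
          have hGne : M.Cw w' (insert f (μt.wm w')) ≠ μt.wm w' := fun h => hfmt (h ▸ hfG)
          exact hfE1 ⟨M.Cw w' (insert f (μt.wm w')), ⟨hIRC, hGne⟩, hfG, hfmt⟩
        · have hGsub' : M.Cw w' (insert f (μt.wm w')) ⊆ μt.wm w' := by
            intro x hx
            rcases Finset.mem_insert.1 (cw'.subset _ hx) with h | h
            · exact absurd (h ▸ hx) hfG
            · exact h
          have h := choice_irc injw cw' hGsub' (Finset.subset_insert _ _)
          rw [hμt.1.2 w'] at h
          exact h.symm
      have hset : insert f (μ.wm w') ∪ μt.wm w' = insert f (μt.wm w') ∪ μ.wm w' := by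
        ext x
        simp only [Finset.mem_union, Finset.mem_insert]
        tauto
      have hpi1 := choice_pi injw cw' csubw (insert f (μ.wm w')) (μt.wm w')
      rw [hset, ← hYdef] at hpi1
      have hpi2 := choice_pi injw cw' csubw (insert f (μt.wm w')) (μ.wm w')
      rw [hGsmall] at hpi2
      exact hpi1.trans (hpi2.symm.trans (decomp hsub hlad hμ hμt hge w'))
  -- cardinality of Y
  have hYcard : Y.card = (μ.wm w').card := by
    have le1 : Y.card ≤ (μt.wm w').card := by
      have h := hlad.2 w' Y (Y ∪ μt.wm w') Finset.subset_union_left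
      rwa [hYmt, hCY] at h
    have le2 : (μ.wm w').card ≤ Y.card := by
      have h := hlad.2 w' (μ.wm w') (insert f (μ.wm w')) (Finset.subset_insert _ _)
      rw [hμ.1.2 w', ← hYdef] at h
      exact h
    exact le_antisymm (le1.trans_eq (hcards.2 w').symm) le2
  -- extract the rejected firm f'
  have hsub2 : Y \ {f} ⊆ μ.wm w' := by
    intro x hx
    have hx' := Finset.mem_sdiff.1 hx
    rcases Finset.mem_insert.1 (hYsub hx'.1) with h | h
    · exact absurd (Finset.mem_singleton.2 h) hx'.2
    · exact h
  have hYfcard : (Y \ {f}).card = (μ.wm w').card - 1 := by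
    rw [Finset.card_sdiff_of_subset (Finset.singleton_subset_iff.2 hfY), Finset.card_singleton, hYcard]
  have hμpos : 0 < (μ.wm w').card := hYcard ▸ Finset.card_pos.2 ⟨f, hfY⟩
  have hone : (μ.wm w' \ (Y \ {f})).card = 1 := by
    rw [Finset.card_sdiff_of_subset hsub2, hYfcard]
    omega
  obtain ⟨f', hf'⟩ := Finset.card_eq_one.1 hone
  have hf'mem : f' ∈ μ.wm w' ∧ f' ∉ Y \ {f} :=
    Finset.mem_sdiff.1 (hf' ▸ Finset.mem_singleton_self f')
  have hf'nef : f' ≠ f := fun h => hfμw' (h ▸ hf'mem.1)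
  have hf'notY : f' ∉ Y := fun h =>
    hf'mem.2 (Finset.mem_sdiff.2 ⟨h, fun hc => hf'nef (Finset.mem_singleton.1 hc)⟩)
  have hμdiff : μ.wm w' \ Y = {f'} := by
    rw [← hf']
    ext x
    simp only [Finset.mem_sdiff, Finset.mem_singleton]
    constructor
    · rintro ⟨h1, h2⟩
      exact ⟨h1, fun hc => h2 hc.1⟩
    · rintro ⟨h1, h2⟩
      exact ⟨h1, fun hY => h2 ⟨hY, fun hc => hfμw' (hc ▸ h1)⟩⟩
  have hYeq : Y = insert f (μ.wm w' \ {f'}) := by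
    ext x
    simp only [Finset.mem_insert, Finset.mem_sdiff, Finset.mem_singleton]
    constructor
    · intro hx
      by_cases hxf : x = f
      · exact Or.inl hxf
      · right
        refine ⟨?_, fun hc => hf'notY (hc ▸ hx)⟩
        rcases Finset.mem_insert.1 (hYsub hx) with h | h
        · exact absurd h hxf
        · exact h
    · rintro (rfl | ⟨hxμ, hxf'⟩)
      · exact hfY
      · by_contra hxY
        have hxd : x ∈ μ.wm w' \ Y := Finset.mem_sdiff.2 ⟨hxμ, hxY⟩
        rw [hμdiff] at hxd
        exact hxf' (Finset.mem_singleton.1 hxd)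
  -- f' is not a μt-partner of w'
  have hf'mt : f' ∉ μt.wm w' := by
    intro hc
    have h1 : f' ∈ M.Cw w' (Y ∪ μt.wm w') := by rw [hYmt]; exact hc
    have hins : insert f (μ.wm w') ⊆ Y ∪ μt.wm w' := by
      intro x hx
      rcases Finset.mem_insert.1 hx with rfl | h
      · exact Finset.mem_union_left _ hfY
      · by_cases hxY : x ∈ Y
        · exact Finset.mem_union_left _ hxY
        · have hxd : x ∈ μ.wm w' \ Y := Finset.mem_sdiff.2 ⟨h, hxY⟩
          rw [hμdiff] at hxd
          rw [Finset.mem_singleton.1 hxd]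
          exact Finset.mem_union_right _ hc
    have h2 : f' ∈ M.Cw w' (insert f (μ.wm w')) :=
      choice_subst' csubw h1 (Finset.mem_insert_of_mem hf'mem.1) hins
    rw [← hYdef] at h2
    exact hf'notY h2
  -- condition (iii)
  have hfE3 : f ∉ M.E3 μ μt w' := by
    rintro (hacc | hD)
    · exact hacc (choice_singleton_acc (hsub.1 f) (cf_spec M f) hw'mem.1)
    · rcases hD with h | h
      · exact hw'good (Or.inl (Or.inl h))
      · exact hw'good (Or.inl (Or.inr h))
  have hfEall : f ∉ M.Eall μ μt w' := by
    rintro ((h | h) | h)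
    · exact hfE1 h
    · exact hfE2 h
    · exact hfE3 h
  have hfilterw : (μ.wm w' ∪ {f}).filter (fun x => x ∉ M.Eall μ μt w') = μ.wm w' ∪ {f} := by
    rw [Finset.filter_eq_self]
    intro x hx
    rcases Finset.mem_union.1 hx with h | h
    · exact goodWμ hsub hlad hμ hμt hge h
    · rw [Finset.mem_singleton.1 h]
      exact hfEall
  have hcond3 : M.Cwred μ μt w' (μ.wm w' ∪ {f}) = insert f (μ.wm w' \ {f'}) := by
    rw [Cwred_eq_filter, hfilterw, hunion, ← hYdef]
    exact hYeq
  exact ⟨f', w', ⟨(μ.consistent f' w').2 hf'mem.1,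
    fun h => hf'mt ((μt.consistent f' w').1 h)⟩, hcond2, hcond3⟩

end Reduced
end Market
lemma matching_ext' {F W : Type*} {μ ν : Matching F W} (h : ∀ f, μ.fm f = ν.fm f) : μ = ν := by
  obtain ⟨fm1, wm1, c1⟩ := μ
  obtain ⟨fm2, wm2, c2⟩ := ν
  simp only at h
  have hfm : fm1 = fm2 := funext h
  subst hfm
  have hwm : wm1 = wm2 := by
    funext w
    ext g
    rw [← c1 g w, ← c2 g w]
  subst hwm
  rfl

lemma mod_succ_helper (r n : ℕ) : (n + 1) % r = (n % r + 1) % r := by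
  conv_lhs => rw [← Nat.mod_add_div n r]
  rw [show n % r + r * (n / r) + 1 = n % r + 1 + r * (n / r) by ring,
    Nat.add_mul_mod_self_left]

theorem cycle_exists_iff' {F W : Type*} [DecidableEq F] [DecidableEq W] [Fintype W]
    (M : Market F W) (hsub : M.SubstAll) (hlad : M.LADAll)
    (μ μt : Matching F W) (hμ : M.Stable μ) (hμt : M.Stable μt) (hge : M.geF μ μt) :
    (∃ (r : ℕ) (w : ℕ → W) (f : ℕ → F), M.IsCycle μ μt r w f) ↔ μ ≠ μt := by
  constructor
  · rintro ⟨r, w, f, hr, hwp, hfp, hcond⟩ heq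
    obtain ⟨⟨h1, h2⟩, -, -⟩ := hcond 0
    rw [heq] at h1
    exact h2 h1
  · intro hne
    classical
    have hcards := Market.cards_eq hsub hlad hμ hμt hge
    have hdiff : ∃ f0, μ.fm f0 ≠ μt.fm f0 := by
      by_contra h
      push_neg at h
      exact hne (matching_ext' h)
    obtain ⟨f0, hf0⟩ := hdiff
    have hw0 : ∃ w0 ∈ μ.fm f0, w0 ∉ μt.fm f0 := by
      by_contra h
      push_neg at h
      exact hf0 (Finset.eq_of_subset_of_card_le h (le_of_eq (hcards.1 f0)))
    obtain ⟨w0, hw0A, hw0B⟩ := hw0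
    let inv : F × W → Prop := fun p => p.2 ∈ μ.fm p.1 ∧ p.2 ∉ μt.fm p.1
    let Cond : F × W → F × W → Prop := fun p q =>
      M.Cfred μ μt p.1 (Finset.univ \ {p.2}) = insert q.2 (μ.fm p.1 \ {p.2}) ∧
      M.Cwred μ μt q.2 (μ.wm q.2 ∪ {p.1}) = insert p.1 (μ.wm q.2 \ {q.1})
    have hstep : ∀ p : F × W, inv p → ∃ q, inv q ∧ Cond p q := by
      rintro ⟨pf, pw⟩ ⟨h1, h2⟩
      obtain ⟨f', w', hinv, hc2, hc3⟩ := Market.key_step hsub hlad hμ hμt hge h1 h2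
      exact ⟨(f', w'), hinv, hc2, hc3⟩
    let seq : ℕ → {p : F × W // inv p} := fun n =>
      Nat.rec ⟨(f0, w0), ⟨hw0A, hw0B⟩⟩
        (fun _ s => ⟨(hstep s.1 s.2).choose, (hstep s.1 s.2).choose_spec.1⟩) n
    have hseq : ∀ n, Cond (seq n).1 (seq (n + 1)).1 := fun n =>
      (hstep (seq n).1 (seq n).2).choose_spec.2
    let FWp : Finset (F × W) := Finset.univ.biUnion (fun w => (μ.wm w).image (fun f => (f, w)))
    have hmemFW : ∀ n, (seq n).1 ∈ FWp := by
      intro n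
      exact Finset.mem_biUnion.2 ⟨(seq n).1.2, Finset.mem_univ _, Finset.mem_image.2
        ⟨(seq n).1.1, (μ.consistent _ _).1 (seq n).2.1, rfl⟩⟩
    obtain ⟨i, hi, j, hj, hij, hvij⟩ := Finset.exists_ne_map_eq_of_card_lt_of_maps_to
      (s := Finset.range (FWp.card + 1)) (t := FWp)
      (by rw [Finset.card_range]; omega) (fun n _ => hmemFW n)
    obtain ⟨k, l, hkl, hvkl⟩ : ∃ k l, k < l ∧ (seq k).1 = (seq l).1 := by
      rcases lt_or_gt_of_ne hij with h | h
      · exact ⟨i, j, h, hvij⟩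
      · exact ⟨j, i, h, hvij.symm⟩
    set r := l - k with hrdef
    have hr : 0 < r := by omega
    let g : ℕ → F × W := fun n => (seq (k + n % r)).1
    have hper : ∀ n, g (n + r) = g n := by
      intro n
      show (seq (k + (n + r) % r)).1 = (seq (k + n % r)).1
      rw [Nat.add_mod_right]
    have hginv : ∀ n, inv (g n) := fun n => (seq (k + n % r)).2
    have hstep' : ∀ n, Cond (g n) (g (n + 1)) := by
      intro n
      have hmod : (n + 1) % r = (n % r + 1) % r := mod_succ_helper r n
      have hgn1 : g (n + 1) = (seq (k + (n + 1) % r)).1 := rfl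
      by_cases hcase : n % r + 1 = r
      · have h1 : (n + 1) % r = 0 := by rw [hmod, hcase, Nat.mod_self]
        have h2 := hseq (k + n % r)
        have h3 : (seq (k + n % r + 1)).1 = g (n + 1) := by
          rw [hgn1, h1, Nat.add_zero]
          have hl : k + n % r + 1 = l := by omega
          rw [hl]
          exact hvkl.symm
        rw [← h3]
        exact h2
      · have hlt : n % r + 1 < r :=
          lt_of_le_of_ne (Nat.succ_le_of_lt (Nat.mod_lt n hr)) hcase
        have h1 : (n + 1) % r = n % r + 1 := by rw [hmod]; exact Nat.mod_eq_of_lt hlt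
        have h3 : g (n + 1) = (seq (k + n % r + 1)).1 := by
          rw [hgn1, h1, Nat.add_assoc]
        rw [h3]
        exact hseq (k + n % r)
    refine ⟨r, fun n => (g n).2, fun n => (g n).1, hr,
      fun n => congrArg Prod.snd (hper n), fun n => congrArg Prod.fst (hper n), ?_⟩
    intro i0
    exact ⟨hginv i0, (hstep' i0).1, (hstep' i0).2⟩

/-- Proposition 1. With substitutable preferences satisfying the law of
aggregate demand and stable matchings `μ ⪰_F μ̃`, there exists a cycle for the reduced
profile `P^{μ,μ̃}` if and only if `μ ≠ μ̃`. -/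
theorem cycle_exists_iff {F W : Type*} [DecidableEq F] [DecidableEq W] [Fintype W]
    (M : Market F W) (hsub : M.SubstAll) (hlad : M.LADAll)
    (μ μt : Matching F W) (hμ : M.Stable μ) (hμt : M.Stable μt) (hge : M.geF μ μt) :
    (∃ (r : ℕ) (w : ℕ → W) (f : ℕ → F), M.IsCycle μ μt r w f) ↔ μ ≠ μt := by
  exact cycle_exists_iff' M hsub hlad μ μt hμ hμt hge
end
end
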